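/- Let a, b, c, d lie in positive order on the unit circle, with a + c ≠ 0, b + d ≠ 0, ab ≠ cd, ad ≠ bc, and set w1 := (ab(c+d) − cd(a+b))/(ab − cd) and w3 := (ad(b+c) − bc(a+d))/(ad − bc), with w1 ≠ w3. Let w ∈ ℂ with |w| < 1 satisfy |w − 2ac/(a+c)| = |a − 2ac/(a+c)| and |w − 2bd/(b+d)| = |b − 2bd/(b+d)| (w is the point of intersection of the hyperbolic lines J*[a,c] and J*[b,d]). Then for every z ∈ ℂ: |z − w|² = |z|² − 1 if and only if z, w1 and w3 are collinear (over ℝ, viewing ℂ as the real plane). Equivalently, the circle orthogonal to the unit circle centered at z (of radius √(|z|² − 1)) passes through w if and only if z lies on the euclidean line through w1 and w3. -/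

import Mathlib

/-!
Expanding, `‖z - w‖² = ‖z‖² - 1` says `Re (z * conj w) = (‖w‖² + 1) / 2`, so for `w ≠ 0` the
centres of the circles orthogonal to the unit circle through `w` fill a line, the polar of `w`.
The centres `2ac/(a+c)` and `2bd/(b+d)` of the circles carrying `J*[a,c]` and `J*[b,d]` lie on it.
On the unit circle `conj x = x⁻¹`, and a direct computation then shows that `w1` and `w3` lie on
the line through these two centres (the diagonal triangle of an inscribed quadrangle is
self-polar). Hence the polar of `w` is the line through `w1` and `w3`.
-/

open Complex

def PosOrderOnCircle (a b c d : ℂ) : Prop :=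
  ∃ θ₁ θ₂ θ₃ θ₄ : ℝ, θ₁ < θ₂ ∧ θ₂ < θ₃ ∧ θ₃ < θ₄ ∧ θ₄ < θ₁ + 2 * Real.pi ∧
    a = Complex.exp (θ₁ * Complex.I) ∧ b = Complex.exp (θ₂ * Complex.I) ∧
    c = Complex.exp (θ₃ * Complex.I) ∧ d = Complex.exp (θ₄ * Complex.I)

open ComplexConjugate

lemma norm_sub_sq_eq_norm_sq_sub_one_iff (z w : ℂ) :
    ‖z - w‖ ^ 2 = ‖z‖ ^ 2 - 1 ↔ (z * conj w).re = (normSq w + 1) / 2 := by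
  rw [Complex.sq_norm, Complex.sq_norm, normSq_sub]
  constructor <;> intro h <;> linarith

lemma collinear_iff_im_sub_mul_conj_sub_eq_zero (z u v : ℂ) :
    Collinear ℝ ({z, u, v} : Set ℂ) ↔ ((z - u) * conj (v - u)).im = 0 := by
  rcases eq_or_ne u v with rfl | huv
  · simp [collinear_pair]
  have hline : Collinear ℝ ({z, u, v} : Set ℂ) ↔ z ∈ line[ℝ, u, v] :=
    ⟨fun h ↦ h.mem_affineSpan_of_mem_of_ne (by simp) (by simp) (by simp) huv,
      collinear_insert_of_mem_affineSpan_pair⟩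
  simp only [hline, mem_affineSpan_pair_iff_exists_lineMap_eq, AffineMap.lineMap_apply,
    vsub_eq_sub, vadd_eq_add, real_smul]
  constructor
  · rintro ⟨r, rfl⟩
    rw [add_sub_cancel_right, mul_assoc, mul_conj, ← ofReal_mul, ofReal_im]
  · intro him
    have hvu : (normSq (v - u) : ℂ) ≠ 0 :=
      ofReal_ne_zero.2 (normSq_eq_zero.not.2 (sub_ne_zero.2 huv.symm))
    have hreal : ((((z - u) * conj (v - u)).re : ℝ) : ℂ) = (z - u) * conj (v - u) :=
      Complex.ext (ofReal_re _) (by rw [ofReal_im, him])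
    refine ⟨((z - u) * conj (v - u)).re / normSq (v - u), ?_⟩
    rw [ofReal_div, hreal, div_mul_eq_mul_div, mul_assoc, mul_comm (conj _), mul_conj]
    field_simp
    ring

lemma re_mul_conj_eq_zero_iff_im_mul_conj_eq_zero {x y w : ℂ} (hw : w ≠ 0) (hy : y ≠ 0)
    (hyw : (y * conj w).re = 0) : (x * conj w).re = 0 ↔ (x * conj y).im = 0 := by
  simp only [mul_re, mul_im, conj_re, conj_im] at hyw ⊢
  constructor
  · intro hxw
    have h : (x.im * y.re - x.re * y.im) * normSq w = 0 := by
      rw [normSq_apply]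
      linear_combination (y.re * w.im - y.im * w.re) * hxw + (x.im * w.re - x.re * w.im) * hyw
    linear_combination (mul_eq_zero.1 h).resolve_right (normSq_eq_zero.not.2 hw)
  · intro hxy
    have h : (x.re * w.re + x.im * w.im) * normSq y = 0 := by
      rw [normSq_apply]
      linear_combination (y.re * w.im - y.im * w.re) * hxy + (x.re * y.re + x.im * y.im) * hyw
    linear_combination (mul_eq_zero.1 h).resolve_right (normSq_eq_zero.not.2 hy)

lemma re_mul_conj_eq_iff_collinear {u v w : ℂ} {k : ℝ} (hw : w ≠ 0) (huv : u ≠ v)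
    (hu : (u * conj w).re = k) (hv : (v * conj w).re = k) (z : ℂ) :
    (z * conj w).re = k ↔ Collinear ℝ ({z, u, v} : Set ℂ) := by
  have hvu : ((v - u) * conj w).re = 0 := by rw [sub_mul, sub_re, hu, hv, sub_self]
  rw [collinear_iff_im_sub_mul_conj_sub_eq_zero,
    ← re_mul_conj_eq_zero_iff_im_mul_conj_eq_zero hw (sub_ne_zero.2 huv.symm) hvu,
    sub_mul, sub_re, hu, sub_eq_zero]

noncomputable def orthogonalCircleCenter (a c : ℂ) : ℂ := 2 * a * c / (a + c)

/-- For `a, b, c, d` on the unit circle, the intersection point of the lines `ab` and `cd`. -/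
noncomputable def secantIntersection (a b c d : ℂ) : ℂ :=
  (a * b * (c + d) - c * d * (a + b)) / (a * b - c * d)

lemma orthogonalCircleCenter_comm (a c : ℂ) :
    orthogonalCircleCenter a c = orthogonalCircleCenter c a := by
  simp only [orthogonalCircleCenter, mul_right_comm _ a c, add_comm a c]

lemma secantIntersection_swap_right (a b c d : ℂ) :
    secantIntersection a b c d = secantIntersection a b d c := by
  simp only [secantIntersection, mul_comm c d, add_comm c d]

lemma ne_zero_of_norm_eq_one {a : ℂ} (ha : ‖a‖ = 1) : a ≠ 0 := by
  rintro rfl; simp at ha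

lemma conj_orthogonalCircleCenter {a c : ℂ} (ha : ‖a‖ = 1) (hc : ‖c‖ = 1) (hac : a + c ≠ 0) :
    conj (orthogonalCircleCenter a c) = 2 / (a + c) := by
  have := ne_zero_of_norm_eq_one ha
  have := ne_zero_of_norm_eq_one hc
  simp only [orthogonalCircleCenter, map_div₀, map_mul, map_add, map_ofNat,
    ← inv_eq_conj ha, ← inv_eq_conj hc]
  field_simp
  rw [add_comm c a, div_self hac]

lemma norm_orthogonalCircleCenter_sub_sq {a c : ℂ} (ha : ‖a‖ = 1) (hc : ‖c‖ = 1)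
    (hac : a + c ≠ 0) :
    ‖orthogonalCircleCenter a c - a‖ ^ 2 = ‖orthogonalCircleCenter a c‖ ^ 2 - 1 := by
  have := ne_zero_of_norm_eq_one ha
  rw [norm_sub_sq_eq_norm_sq_sub_one_iff, normSq_eq_norm_sq, ha, ← ofReal_inj, re_eq_add_conj,
    map_mul, conj_conj, conj_orthogonalCircleCenter ha hc hac, ← inv_eq_conj ha,
    orthogonalCircleCenter]
  push_cast
  field_simp
  ring

lemma orthogonalCircleCenter_ne {a b c d : ℂ} (ha : ‖a‖ = 1) (hb : ‖b‖ = 1) (hc : ‖c‖ = 1)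
    (hd : ‖d‖ = 1) (hac : a + c ≠ 0) (hbd : b + d ≠ 0) (hab : a ≠ b) (had : a ≠ d) :
    orthogonalCircleCenter a c ≠ orthogonalCircleCenter b d := by
  intro hpq
  have hsum : a + c = b + d := by
    have h := congrArg conj hpq
    rw [conj_orthogonalCircleCenter ha hc hac, conj_orthogonalCircleCenter hb hd hbd,
      div_eq_div_iff hac hbd] at h
    linear_combination -h / 2
  have hprod : a * c = b * d := by
    rw [orthogonalCircleCenter, orthogonalCircleCenter, ← hsum, div_left_inj' hac] at hpq
    linear_combination hpq / 2
  have h : (a - b) * (a - d) = 0 := by linear_combination a * hsum - hprod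
  rcases mul_eq_zero.1 h with h | h
  · exact hab (sub_eq_zero.1 h)
  · exact had (sub_eq_zero.1 h)

lemma collinear_secantIntersection_orthogonalCircleCenter {a b c d : ℂ} (ha : ‖a‖ = 1)
    (hb : ‖b‖ = 1) (hc : ‖c‖ = 1) (hd : ‖d‖ = 1) (hac : a + c ≠ 0) (hbd : b + d ≠ 0)
    (habcd : a * b ≠ c * d) :
    Collinear ℝ
      {secantIntersection a b c d, orthogonalCircleCenter a c, orthogonalCircleCenter b d} := by
  have := ne_zero_of_norm_eq_one ha
  have := ne_zero_of_norm_eq_one hb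
  have := ne_zero_of_norm_eq_one hc
  have := ne_zero_of_norm_eq_one hd
  have := sub_ne_zero.2 habcd
  rw [collinear_iff_im_sub_mul_conj_sub_eq_zero, ← conj_eq_iff_im, map_mul, conj_conj, map_sub,
    map_sub, conj_orthogonalCircleCenter ha hc hac, conj_orthogonalCircleCenter hb hd hbd]
  simp only [secantIntersection, orthogonalCircleCenter, map_div₀, map_sub, map_mul, map_add,
    ← inv_eq_conj ha, ← inv_eq_conj hb, ← inv_eq_conj hc, ← inv_eq_conj hd]
  field_simp
  ring

lemma PosOrderOnCircle.norm_eq_one {a b c d : ℂ} (h : PosOrderOnCircle a b c d) :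
    ‖a‖ = 1 ∧ ‖b‖ = 1 ∧ ‖c‖ = 1 ∧ ‖d‖ = 1 := by
  obtain ⟨_, _, _, _, -, -, -, -, rfl, rfl, rfl, rfl⟩ := h
  simp only [norm_exp_ofReal_mul_I, and_self]

lemma PosOrderOnCircle.ne {a b c d : ℂ} (h : PosOrderOnCircle a b c d) : a ≠ b ∧ a ≠ d := by
  obtain ⟨θ₁, θ₂, θ₃, θ₄, h12, h23, h34, h41, rfl, rfl, -, rfl⟩ := h
  have hinj := Circle.exp_injOn_Ico (a := θ₁) (b := θ₁ + 2 * Real.pi) (by linarith)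
  have hθ₁ : θ₁ ∈ Set.Ico θ₁ (θ₁ + 2 * Real.pi) := ⟨le_rfl, by linarith [Real.pi_pos]⟩
  refine ⟨fun h ↦ ?_, fun h ↦ ?_⟩
  · exact h12.ne (hinj hθ₁ ⟨by linarith, by linarith⟩ (Circle.ext h))
  · exact (h12.trans (h23.trans h34)).ne (hinj hθ₁ ⟨by linarith, h41⟩ (Circle.ext h))

theorem orthogonal_circle_through_w_iff_center_on_line (a b c d w : ℂ)
    (hord : PosOrderOnCircle a b c d)
    (hac : a + c ≠ 0) (hbd : b + d ≠ 0)
    (h1 : a * b ≠ c * d) (h3 : a * d ≠ b * c)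
    (hw1 : ‖w - 2 * a * c / (a + c)‖ = ‖a - 2 * a * c / (a + c)‖)
    (hw2 : ‖w - 2 * b * d / (b + d)‖ = ‖b - 2 * b * d / (b + d)‖)
    (hww : (a * b * (c + d) - c * d * (a + b)) / (a * b - c * d) ≠
      (a * d * (b + c) - b * c * (a + d)) / (a * d - b * c)) :
    let w1 := (a * b * (c + d) - c * d * (a + b)) / (a * b - c * d)
    let w3 := (a * d * (b + c) - b * c * (a + d)) / (a * d - b * c)
    ∀ z : ℂ, ‖z - w‖ ^ 2 = ‖z‖ ^ 2 - 1 ↔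
      Collinear ℝ ({z, w1, w3} : Set ℂ) := by
  obtain ⟨ha, hb, hc, hd⟩ := hord.norm_eq_one
  obtain ⟨hab, had⟩ := hord.ne
  have hp : (orthogonalCircleCenter a c * conj w).re = (normSq w + 1) / 2 := by
    rw [← norm_sub_sq_eq_norm_sq_sub_one_iff, norm_sub_rev, orthogonalCircleCenter, hw1,
      norm_sub_rev]
    exact norm_orthogonalCircleCenter_sub_sq ha hc hac
  have hq : (orthogonalCircleCenter b d * conj w).re = (normSq w + 1) / 2 := by
    rw [← norm_sub_sq_eq_norm_sq_sub_one_iff, norm_sub_rev, orthogonalCircleCenter, hw2,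
      norm_sub_rev]
    exact norm_orthogonalCircleCenter_sub_sq hb hd hbd
  have hw0 : w ≠ 0 := by
    rintro rfl
    norm_num at hp
  have hpolar := re_mul_conj_eq_iff_collinear hw0
    (orthogonalCircleCenter_ne ha hb hc hd hac hbd hab had) hp hq
  have hw1_polar : (secantIntersection a b c d * conj w).re = (normSq w + 1) / 2 :=
    (hpolar _).2 (collinear_secantIntersection_orthogonalCircleCenter ha hb hc hd hac hbd h1)
  have hw3_polar : (secantIntersection a d b c * conj w).re = (normSq w + 1) / 2 := by
    refine (hpolar _).2 ?_
    have h := collinear_secantIntersection_orthogonalCircleCenter ha hd hc hb hac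
      (by rwa [add_comm]) (by rwa [mul_comm c b])
    rwa [orthogonalCircleCenter_comm d b, ← secantIntersection_swap_right] at h
  intro w1 w3 z
  rw [norm_sub_sq_eq_norm_sq_sub_one_iff]
  exact re_mul_conj_eq_iff_collinear hw0 hww hw1_polar hw3_polar z
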